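/- Consider the dihedral quandle structure on ZMod 3, with operation a ▷ b := 2*b − a, and equip ZMod 3 with the indiscrete topology (so every 1-simplex is a continuous path). Then the quotient of the free abelian group on ZMod 3 by the subgroup generated by all elements (of a) − (of (2*b − a)), for a, b ∈ ZMod 3, is isomorphic as an additive group to ℤ. (This quotient is the zeroth topological quandle homology group H₀(ℤ₃).) -/

import Mathlib

/-!
Every generator `of a - of (2b - a)` has augmentation `0`, and choosing `b = 2a` gives
`2b - a = 3a = 0`, so every point is identified with `0`. Hence the relations generate exactly
the kernel of the augmentation `FreeAbelianGroup (ZMod 3) → ℤ`, `of a ↦ 1`, and the quotient is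
its image `ℤ`.
-/

namespace FreeAbelianGroup

variable {X : Type*}

variable (X) in
def augmentation : FreeAbelianGroup X →+ ℤ :=
  lift fun _ => 1

@[simp]
theorem augmentation_of (a : X) : augmentation X (of a) = 1 :=
  lift_apply_of _ _

theorem augmentation_surjective [Nonempty X] : Function.Surjective (augmentation X) := by
  intro n
  refine ⟨n • of (Classical.arbitrary X), ?_⟩
  simp

theorem ker_augmentation_le_closure {S : Set (FreeAbelianGroup X)} (x₀ : X)
    (hconn : ∀ a, of a - of x₀ ∈ AddSubgroup.closure S) :
    (augmentation X).ker ≤ AddSubgroup.closure S := by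
  let mk := QuotientAddGroup.mk' (AddSubgroup.closure S)
  -- In the quotient every generator equals `mk (of x₀)`, so `mk` factors through the augmentation.
  have hfactor : mk = (zmultiplesHom _ (mk (of x₀))).comp (augmentation X) := by
    ext a
    simpa [mk, QuotientAddGroup.eq_iff_sub_mem] using hconn a
  intro z hz
  rw [← QuotientAddGroup.ker_mk' (AddSubgroup.closure S), AddMonoidHom.mem_ker]
  change mk z = 0
  rw [hfactor]
  simp [(augmentation X).mem_ker.mp hz]

theorem closure_eq_ker_augmentation {S : Set (FreeAbelianGroup X)} (x₀ : X)
    (hS : ∀ z ∈ S, augmentation X z = 0) (hconn : ∀ a, of a - of x₀ ∈ AddSubgroup.closure S) :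
    AddSubgroup.closure S = (augmentation X).ker :=
  le_antisymm ((AddSubgroup.closure_le _).mpr hS) (ker_augmentation_le_closure x₀ hconn)

end FreeAbelianGroup

/-- For the dihedral quandle `ℤ₃` (operation `a ▷ b = 2b - a`) with the indiscrete
topology (so all pairs of points are joined by paths), the zeroth topological quandle
homology group — the quotient of the free abelian group on `ℤ₃` by the subgroup generated
by all elements `of a - of (2b - a)` — is isomorphic to `ℤ`. -/
theorem H0_dihedral_ZMod3_indiscrete :
    Nonempty ((FreeAbelianGroup (ZMod 3) ⧸ AddSubgroup.closure
      {z : FreeAbelianGroup (ZMod 3) | ∃ a b : ZMod 3,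
        z = FreeAbelianGroup.of a - FreeAbelianGroup.of (2 * b - a)}) ≃+ ℤ) := by
  open FreeAbelianGroup in
  set R : Set (FreeAbelianGroup (ZMod 3)) := {z | ∃ a b : ZMod 3, z = of a - of (2 * b - a)}
  have hR : ∀ z ∈ R, augmentation _ z = 0 := by
    rintro _ ⟨a, b, rfl⟩
    simp
  have hconn : ∀ a : ZMod 3, of a - of 0 ∈ AddSubgroup.closure R := by
    intro a
    have h3a : 2 * (2 * a) - a = 0 := by decide +revert
    exact AddSubgroup.subset_closure ⟨a, 2 * a, by rw [h3a]⟩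
  exact ⟨(QuotientAddGroup.quotientAddEquivOfEq (closure_eq_ker_augmentation 0 hR hconn)).trans
    (QuotientAddGroup.quotientKerEquivOfSurjective _ augmentation_surjective)⟩
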